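/- arXiv:2601.06648 — 3 statements merged into one kernel-verified Lean document; each statement's English description precedes it below -/
import Mathlib

section
/- Let A be an n×n real symmetric positive semidefinite matrix with tr A = 1, and let q_1, …, q_p ∈ ℝⁿ be orthonormal vectors lying in the kernel of A. Suppose μ ∈ ℝ and real scalars λ_{ij} (1 ≤ i ≤ j ≤ p) are such that the symmetric matrix M := Σ_{1 ≤ i ≤ j ≤ p} λ_{ij} · (q_i q_jᵀ + q_j q_iᵀ)/2 satisfies M_{ss} = −μ for every s = 1, …, n and M_{st} = 0 for all s ≠ t. Then μ = 0 and λ_{ij} = 0 for all 1 ≤ i ≤ j ≤ p. (This is the linear-independence content of the nondegeneracy condition at every feasible point of the problem: minimize f(x) subject to tr X(x) = 1, X(x) ⪰ 0.) -/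
open Matrix

private lemma myhelp_sum_mulVec {ι : Type*} {n : ℕ} (s : Finset ι)
    (f : ι → Matrix (Fin n) (Fin n) ℝ) (v : Fin n → ℝ) :
    (∑ i ∈ s, f i) *ᵥ v = ∑ i ∈ s, f i *ᵥ v := by
  ext t
  simp [mulVec, dotProduct, Matrix.sum_apply, Finset.sum_mul]
  exact Finset.sum_comm

private lemma myhelp_dot_sum {ι : Type*} {n : ℕ} (s : Finset ι)
    (f : ι → Fin n → ℝ) (v : Fin n → ℝ) :
    v ⬝ᵥ (∑ i ∈ s, f i) = ∑ i ∈ s, v ⬝ᵥ f i := by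
  simp [dotProduct, Finset.mul_sum]
  exact Finset.sum_comm

private lemma myhelp_dot_vmv {n : ℕ} (u v w x : Fin n → ℝ) :
    w ⬝ᵥ (vecMulVec u v) *ᵥ x = (w ⬝ᵥ u) * (v ⬝ᵥ x) := by
  simp [mulVec, vecMulVec, dotProduct, Finset.mul_sum, Finset.sum_mul]
  rw [Finset.sum_comm]
  congr 1; ext s; congr 1; ext t; ring

private lemma myhelp_mul_vmv {n : ℕ} (A : Matrix (Fin n) (Fin n) ℝ) (u v : Fin n → ℝ)
    (h : A.mulVec u = 0) : A * vecMulVec u v = 0 := by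
  ext s t
  have h2 := congrFun h s
  simp only [mulVec, dotProduct, Pi.zero_apply] at h2
  simp only [Matrix.mul_apply, vecMulVec_apply, Matrix.zero_apply]
  calc ∑ k, A s k * (u k * v t) = (∑ k, A s k * u k) * v t := by
        rw [Finset.sum_mul]; simp [mul_assoc]
  _ = 0 := by rw [h2]; ring

private lemma myhelp_split {p : ℕ} (lam : Fin p → Fin p → ℝ) (i j a b : Fin p) :
    (if a ≤ b then
        (lam a b / 2) * ((if i = a then (1:ℝ) else 0) * (if b = j then 1 else 0)
          + (if i = b then 1 else 0) * (if a = j then 1 else 0)) else 0)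
    = (if a = i then (if b = j then (if a ≤ b then lam a b / 2 else 0) else 0) else 0)
      + (if a = j then (if b = i then (if a ≤ b then lam a b / 2 else 0) else 0) else 0) := by
  by_cases h1 : a = i <;> by_cases h3 : a = j <;> by_cases h2 : b = j <;>
    by_cases h4 : b = i <;> by_cases h5 : a ≤ b <;>
    simp_all [eq_comm] <;> ring

/-- Linear-independence content of the nondegeneracy condition for the
PSD problem: with `A ⪰ 0`, `tr A = 1`, orthonormal kernel vectors
`q_1, …, q_p`, if `M = Σ_{i ≤ j} λ_{ij} (q_i q_jᵀ + q_j q_iᵀ)/2` has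
`M_{ss} = -μ` and vanishing off-diagonal entries, then `μ = 0` and all
`λ_{ij} = 0`. -/
theorem ndc_linear_independence_psd
    (n p : ℕ) (A : Matrix (Fin n) (Fin n) ℝ)
    (hA : A.PosSemidef) (htr : A.trace = 1)
    (q : Fin p → Fin n → ℝ)
    (horth : ∀ i j, q i ⬝ᵥ q j = if i = j then 1 else 0)
    (hker : ∀ i, A.mulVec (q i) = 0)
    (μ : ℝ) (lam : Fin p → Fin p → ℝ)
    (M : Matrix (Fin n) (Fin n) ℝ)
    (hM : M = ∑ i : Fin p, ∑ j : Fin p, if i ≤ j then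
        (lam i j / 2) • (vecMulVec (q i) (q j) + vecMulVec (q j) (q i)) else 0)
    (hdiag : ∀ s, M s s = -μ)
    (hoff : ∀ s t, s ≠ t → M s t = 0) :
    μ = 0 ∧ ∀ i j : Fin p, i ≤ j → lam i j = 0 := by
  -- M is a scalar matrix
  have hM1 : M = (-μ) • (1 : Matrix (Fin n) (Fin n) ℝ) := by
    ext s t
    by_cases h : s = t
    · subst h; simp [hdiag s, Matrix.one_apply]
    · simp [hoff s t h, Matrix.one_apply, h]
  -- A * M = 0
  have hAM : A * M = 0 := by
    rw [hM]
    rw [Finset.mul_sum]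
    refine Finset.sum_eq_zero fun i _ => ?_
    rw [Finset.mul_sum]
    refine Finset.sum_eq_zero fun j _ => ?_
    by_cases h : i ≤ j
    · simp only [h, if_true, Matrix.mul_smul, Matrix.mul_add,
        myhelp_mul_vmv A (q i) (q j) (hker i), myhelp_mul_vmv A (q j) (q i) (hker j)]
      simp
    · simp [h]
  have hmu : μ = 0 := by
    have h2 : (-μ) • A = 0 := by
      calc (-μ) • A = A * M := by rw [hM1, Matrix.mul_smul, mul_one]
      _ = 0 := hAM
    have h3 := congrArg Matrix.trace h2
    simp [Matrix.trace_smul, htr] at h3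
    linarith
  refine ⟨hmu, fun i j hij => ?_⟩
  -- M = 0
  have hM0 : M = 0 := by rw [hM1, hmu]; simp
  have hkey : q i ⬝ᵥ M *ᵥ q j = 0 := by rw [hM0]; simp
  rw [hM, myhelp_sum_mulVec, myhelp_dot_sum] at hkey
  have hexp : ∀ a : Fin p, q i ⬝ᵥ (∑ b : Fin p, if a ≤ b then
      (lam a b / 2) • (vecMulVec (q a) (q b) + vecMulVec (q b) (q a)) else 0) *ᵥ q j
      = ∑ b : Fin p, if a ≤ b then
        (lam a b / 2) * ((if i = a then (1:ℝ) else 0) * (if b = j then 1 else 0)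
          + (if i = b then 1 else 0) * (if a = j then 1 else 0)) else 0 := by
    intro a
    rw [myhelp_sum_mulVec, myhelp_dot_sum]
    refine Finset.sum_congr rfl fun b _ => ?_
    by_cases h : a ≤ b
    · simp only [h, if_true, smul_add, add_mulVec, smul_mulVec, dotProduct_add,
        dotProduct_smul, myhelp_dot_vmv, horth, smul_eq_mul]
      ring
    · simp [h]
  simp only [hexp] at hkey
  -- now evaluate the double sum
  have hval : ∑ a : Fin p, ∑ b : Fin p, (if a ≤ b then
        (lam a b / 2) * ((if i = a then (1:ℝ) else 0) * (if b = j then 1 else 0)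
          + (if i = b then 1 else 0) * (if a = j then 1 else 0)) else 0)
      = (if i = j then lam i j else lam i j / 2) := by
    simp only [myhelp_split lam i j, Finset.sum_add_distrib, Finset.sum_ite_eq, Finset.sum_ite_eq',
      Finset.mem_univ, if_true]
    by_cases h : i = j
    · subst h; simp [hij]
    · have h2 : ¬ j ≤ i := fun h' => h (le_antisymm hij h')
      simp [hij, h2, h]
  rw [hval] at hkey
  by_cases h : i = j
  · simpa [h] using hkey
  · simp only [h, if_false] at hkey; linarith
end

section
/- Let A be an n×n real symmetric positive semidefinite matrix and v ∈ ℝ^m with m ≥ 1, v ≥ 0 entrywise, and tr A + v_1 + ⋯ + v_m = 1. Let q_1, …, q_p ∈ ℝⁿ be orthonormal vectors lying in the kernel of A, and let k_1 < ⋯ < k_ℓ be exactly those indices t ∈ {1, …, m} with v_t = 0. Suppose μ ∈ ℝ, real scalars λ_{ij} (1 ≤ i ≤ j ≤ p), and μ_1, …, μ_ℓ ∈ ℝ are such that: (a) the symmetric matrix M := Σ_{1 ≤ i ≤ j ≤ p} λ_{ij} · (q_i q_jᵀ + q_j q_iᵀ)/2 satisfies M_{ss} = −μ for every s and M_{st}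 = 0 for all s ≠ t, and (b) μ·e + μ_1 e_{k_1} + ⋯ + μ_ℓ e_{k_ℓ} = 0 in ℝ^m, where e is the all-ones vector and e_k the k-th standard basis vector. Then μ = 0, all λ_{ij} = 0, and all μ_t = 0. (This is the linear-independence content of the nondegeneracy condition at every feasible point of the mixed problem over S^n_+ × ℝ^m_+.) -/
open Matrix

private theorem aux1 {n : ℕ} (x y u : Fin n → ℝ) :
    (vecMulVec x y).mulVec u = (y ⬝ᵥ u) • x := by
  funext s
  simp only [Matrix.mulVec, vecMulVec_apply, dotProduct, Pi.smul_apply, smul_eq_mul,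
    Finset.sum_mul]
  exact Finset.sum_congr rfl fun i _ => by ring

private theorem aux2 {n : ℕ} (A : Matrix (Fin n) (Fin n) ℝ) (x y : Fin n → ℝ) :
    A * vecMulVec x y = vecMulVec (A.mulVec x) y := by
  ext s t
  simp only [Matrix.mul_apply, vecMulVec_apply, Matrix.mulVec, dotProduct, Finset.sum_mul,
    mul_assoc]


private theorem aux3 {n : ℕ} {α : Type*} (s : Finset α) (f : α → Matrix (Fin n) (Fin n) ℝ)
    (x : Fin n → ℝ) : (∑ i ∈ s, f i).mulVec x = ∑ i ∈ s, (f i).mulVec x := by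
  funext t
  simp only [Matrix.mulVec, dotProduct, Finset.sum_apply, Matrix.sum_apply, Finset.sum_mul]
  rw [Finset.sum_comm]


private theorem aux4 {n : ℕ} {α : Type*} (s : Finset α) (x : Fin n → ℝ) (f : α → Fin n → ℝ) :
    x ⬝ᵥ (∑ i ∈ s, f i) = ∑ i ∈ s, x ⬝ᵥ f i := by
  simp only [dotProduct, Finset.sum_apply, Finset.mul_sum]
  rw [Finset.sum_comm]

/-- Linear-independence content of the nondegeneracy condition for the mixed
problem over `S^n_+ × ℝ^m_+`: with `A ⪰ 0`, `v ≥ 0`, `tr A + Σ v_t = 1`,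
orthonormal kernel vectors `q_1, …, q_p` of `A`, and `k_1 < ⋯ < k_ℓ` exactly
the indices where `v` vanishes, if `M = Σ_{i ≤ j} λ_{ij} (q_i q_jᵀ + q_j q_iᵀ)/2`
has `M_{ss} = -μ`, vanishing off-diagonal entries, and
`μ e + Σ_t μ_t e_{k_t} = 0`, then `μ = 0`, all `λ_{ij} = 0`, and all `μ_t = 0`. -/
theorem ndc_linear_independence_mixed
    (n p m ℓ : ℕ) (hm : 1 ≤ m)
    (A : Matrix (Fin n) (Fin n) ℝ) (hA : A.PosSemidef)
    (v : Fin m → ℝ) (hv : ∀ t, 0 ≤ v t)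
    (htr : A.trace + ∑ t, v t = 1)
    (q : Fin p → Fin n → ℝ)
    (horth : ∀ i j, q i ⬝ᵥ q j = if i = j then 1 else 0)
    (hker : ∀ i, A.mulVec (q i) = 0)
    (k : Fin ℓ → Fin m) (hkmono : StrictMono k)
    (hkzero : ∀ t, v (k t) = 0)
    (hkall : ∀ t : Fin m, v t = 0 → ∃ s, k s = t)
    (μ : ℝ) (lam : Fin p → Fin p → ℝ) (μs : Fin ℓ → ℝ)
    (M : Matrix (Fin n) (Fin n) ℝ)
    (hM : M = ∑ i : Fin p, ∑ j : Fin p, if i ≤ j then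
        (lam i j / 2) • (vecMulVec (q i) (q j) + vecMulVec (q j) (q i)) else 0)
    (hdiag : ∀ s, M s s = -μ)
    (hoff : ∀ s t, s ≠ t → M s t = 0)
    (hb : (fun _ : Fin m => μ) + ∑ t : Fin ℓ, μs t • (Pi.single (k t) 1 : Fin m → ℝ) = 0) :
    μ = 0 ∧ (∀ i j : Fin p, i ≤ j → lam i j = 0) ∧ ∀ t, μs t = 0 := by
  have hM1 : M = (-μ) • (1 : Matrix (Fin n) (Fin n) ℝ) := by
    ext s t
    by_cases h : s = t
    · subst h; simp [hdiag s]
    · simp [hoff s t h, Matrix.one_apply_ne h]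
  -- A * M = 0
  have hAM : A * M = 0 := by
    rw [hM, Finset.mul_sum]
    refine Finset.sum_eq_zero fun i _ => ?_
    rw [Finset.mul_sum]
    refine Finset.sum_eq_zero fun j _ => ?_
    split
    · rw [Matrix.mul_smul, Matrix.mul_add, aux2, aux2, hker, hker]
      ext s t
      simp [vecMulVec_apply]
    · simp
  have hμA : μ • A = 0 := by
    rw [hM1] at hAM
    have : (-μ) • A = 0 := by
      rw [← hAM]; ext s t; simp [Matrix.mul_apply, Matrix.one_apply, mul_comm]
    have h2 := congrArg Neg.neg this
    simpa using h2
  -- μ = 0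
  have hμ : μ = 0 := by
    by_cases hvz : ∀ t, v t = 0
    · have hs : ∑ t, v t = 0 := Finset.sum_eq_zero fun t _ => hvz t
      have htrA : A.trace = 1 := by rw [hs] at htr; linarith
      have := congrArg Matrix.trace hμA
      rw [Matrix.trace_smul] at this
      simp only [Matrix.trace_zero, smul_eq_mul, htrA, mul_one] at this
      exact this
    · push_neg at hvz
      obtain ⟨t, ht⟩ := hvz
      have h := congrFun hb t
      simp only [Pi.add_apply, Finset.sum_apply, Pi.smul_apply, Pi.single_apply,
        smul_eq_mul, Pi.zero_apply] at h
      rw [Finset.sum_eq_zero (fun s _ => ?_)] at h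
      · linarith
      · have hne : t ≠ k s := fun hh => ht (hh ▸ hkzero s)
        simp [hne]
  refine ⟨hμ, ?_, ?_⟩
  · -- lam = 0
    intro a b hab
    have hq0 : q a ⬝ᵥ M.mulVec (q b) = 0 := by
      rw [hM1, hμ]; simp
    rw [hM, aux3, aux4 Finset.univ (q a)] at hq0
    have hrw : ∀ i : Fin p,
        (q a ⬝ᵥ ((∑ j : Fin p, if i ≤ j then
            (lam i j / 2) • (vecMulVec (q i) (q j) + vecMulVec (q j) (q i)) else 0).mulVec (q b)))
        = ∑ j : Fin p, if i ≤ j then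
            lam i j / 2 * ((if j = b then (1:ℝ) else 0) * (if a = i then 1 else 0)
              + (if i = b then (1:ℝ) else 0) * (if a = j then 1 else 0)) else 0 := by
      intro i
      rw [aux3, aux4 Finset.univ (q a)]
      refine Finset.sum_congr rfl fun j _ => ?_
      split
      · rw [Matrix.smul_mulVec, Matrix.add_mulVec, aux1, aux1]
        simp only [dotProduct_smul, dotProduct_add, smul_eq_mul, Pi.add_apply, horth]
        try ring
      · simp
    simp only [hrw] at hq0
    have houter : ∀ i : Fin p, i ≠ a → (∑ j : Fin p, if i ≤ j then
            lam i j / 2 * ((if j = b then (1:ℝ) else 0) * (if a = i then 1 else 0)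
              + (if i = b then (1:ℝ) else 0) * (if a = j then 1 else 0)) else 0) = 0 := by
      intro i hi
      refine Finset.sum_eq_zero fun j _ => ?_
      by_cases hij : i ≤ j
      · rw [if_pos hij]
        have h1 : a ≠ i := fun hh => hi hh.symm
        by_cases h2 : a = j
        · by_cases h3 : i = b
          · exfalso
            exact hi (le_antisymm (h2 ▸ hij) (h3 ▸ hab))
          · simp [h1, h3]
        · simp [h1, h2]
      · rw [if_neg hij]
    have hinner : ∀ j : Fin p, j ≠ b → (if a ≤ j then
            lam a j / 2 * ((if j = b then (1:ℝ) else 0) * (if a = a then 1 else 0)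
              + (if a = b then (1:ℝ) else 0) * (if a = j then 1 else 0)) else 0) = 0 := by
      intro j hj
      by_cases haj : a ≤ j
      · rw [if_pos haj]
        by_cases h2 : a = j
        · have h3 : a ≠ b := fun hh => hj (h2 ▸ hh)
          simp [hj, h3]
        · simp [hj, h2]
      · rw [if_neg haj]
    rw [Finset.sum_eq_single a (fun i _ hi => houter i hi) (by simp)] at hq0
    rw [Finset.sum_eq_single b (fun j _ hj => hinner j hj) (by simp)] at hq0
    rw [if_pos hab, if_pos rfl, if_pos rfl] at hq0
    by_cases h : a = b
    · rw [if_pos h] at hq0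
      linarith
    · rw [if_neg h] at hq0
      simp only [mul_one, mul_zero, add_zero, one_mul] at hq0
      linarith
  · -- μs = 0
    intro t
    have h := congrFun hb (k t)
    simp only [Pi.add_apply, Finset.sum_apply, Pi.smul_apply, Pi.single_apply,
      smul_eq_mul, Pi.zero_apply, hμ] at h
    rw [Finset.sum_eq_single t (fun s _ hs => ?_) (by simp)] at h
    · simpa using h
    · have hne : k t ≠ k s := fun hh => hs (hkmono.injective hh.symm)
      simp [hne]
end

section
/- Let f be a real polynomial in the σ(n) variables x_{ij} (1 ≤ i ≤ j ≤ n) that is homogeneous of degree d, and let Θ(x) be the associated symmetric polynomial matrix. Let a < b and let x : (a,b) → ℝ^{σ(n)} be a differentiable curve such that for every t ∈ (a,b): tr X(x(t)) = 1, the matrix X(x(t)) is invertible, and X(x(t))·Θ(x(t)) = 0. Then the function t ↦ f(x(t)) is constant on (a,b). -/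
open MvPolynomial Matrix

/-- Index set for the upper-triangular entries of an `n × n` symmetric matrix. -/
abbrev SymIdx (n : ℕ) := {p : Fin n × Fin n // p.1 ≤ p.2}

/-- The symmetric matrix `X(x)` built from a vector `x ∈ ℝ^{σ(n)}`. -/
def matOf {n : ℕ} (x : SymIdx n → ℝ) : Matrix (Fin n) (Fin n) ℝ :=
  fun i j => if h : i ≤ j then x ⟨(i, j), h⟩ else x ⟨(j, i), (le_total i j).resolve_left h⟩

/-- The partial derivative of `f` with respect to the variable `x_{ij}`. -/
noncomputable def pd {n : ℕ} (f : MvPolynomial (SymIdx n) ℝ) (i j : Fin n) :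
    MvPolynomial (SymIdx n) ℝ :=
  if h : i ≤ j then pderiv ⟨(i, j), h⟩ f else pderiv ⟨(j, i), (le_total i j).resolve_left h⟩ f

/-- The matrix `Θ(x)` associated with a degree-`d` homogeneous polynomial `f`. -/
noncomputable def thetaMat {n : ℕ} (f : MvPolynomial (SymIdx n) ℝ) (d : ℕ)
    (x : SymIdx n → ℝ) : Matrix (Fin n) (Fin n) ℝ :=
  fun i j =>
    if i = j then eval x (pd f i i) - (d : ℝ) * eval x f
    else (1 / 2) * eval x (pd f i j)

/-!
Since `X(x(t))` is invertible, `X·Θ = 0` forces `Θ(x(t)) = 0`, i.e. `∂f/∂x_{ii} = d·f` and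
`∂f/∂x_{ij} = 0` for `i ≠ j` along the curve. By the chain rule the derivative of `f(x(t))` is
then `d·f(x(t))·tr X(x'(t))`, and `tr X(x'(t))` is the derivative of `tr X(x(t)) = 1`, hence zero.
-/

namespace MvPolynomial

variable {𝕜 σ : Type*} [NontriviallyNormedField 𝕜] [Fintype σ] [DecidableEq σ]

theorem hasDerivAt_eval {x : 𝕜 → σ → 𝕜} {x' : σ → 𝕜} {t : 𝕜} (hx : HasDerivAt x x' t)
    (f : MvPolynomial σ 𝕜) :
    HasDerivAt (fun u => eval (x u) f) (∑ p, eval (x t) (pderiv p f) * x' p) t := by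
  induction f using MvPolynomial.induction_on with
  | C c => simpa using hasDerivAt_const t c
  | add p q hp hq => simpa [add_mul, Finset.sum_add_distrib] using hp.fun_add hq
  | mul_X p s hp =>
    simp only [map_mul, eval_X]
    refine (hp.fun_mul (hasDerivAt_pi.1 hx s)).congr_deriv ?_
    simp only [pderiv_mul, pderiv_X, map_add, map_mul, eval_X, Pi.single_apply,
      apply_ite (eval (x t)), map_zero, mul_ite, mul_one, mul_zero, add_mul, ite_mul, zero_mul,
      Finset.sum_add_distrib, Finset.sum_ite_eq, Finset.mem_univ, if_true, Finset.sum_mul]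
    congr 1
    exact Finset.sum_congr rfl fun _ _ => by ring

end MvPolynomial

section SymmetricMatrices

variable {n d : ℕ} {f : MvPolynomial (SymIdx n) ℝ}

theorem trace_matOf (v : SymIdx n → ℝ) :
    (matOf v).trace = ∑ p : SymIdx n with p.1.1 = p.1.2, v p := by
  refine Finset.sum_bij' (fun i _ => ⟨(i, i), le_rfl⟩) (fun p _ => p.1.1) (by simp) (by simp)
    (by simp) ?_ (by simp [matOf])
  rintro ⟨⟨i, j⟩, hij⟩ h
  obtain rfl : i = j := (Finset.mem_filter.1 h).2
  rfl

theorem hasDerivAt_trace_matOf {x : ℝ → SymIdx n → ℝ} {x' : SymIdx n → ℝ} {t : ℝ}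
    (hx : HasDerivAt x x' t) :
    HasDerivAt (fun u => (matOf (x u)).trace) (matOf x').trace t := by
  simp only [trace_matOf]
  exact HasDerivAt.fun_sum fun p _ => hasDerivAt_pi.1 hx p

theorem eval_pderiv_of_thetaMat_eq_zero {y : SymIdx n → ℝ} (h : thetaMat f d y = 0)
    (p : SymIdx n) : eval y (pderiv p f) = if p.1.1 = p.1.2 then d * eval y f else 0 := by
  obtain ⟨⟨i, j⟩, hij⟩ := p
  have hθ : thetaMat f d y i j = 0 := by rw [h, Matrix.zero_apply]
  by_cases hdiag : i = j
  · subst hdiag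
    simp only [thetaMat, pd, if_true, dif_pos hij] at hθ ⊢
    linarith
  · simp only [thetaMat, pd, if_neg hdiag, dif_pos hij] at hθ ⊢
    simpa using hθ

theorem sum_eval_pderiv_mul_of_thetaMat_eq_zero {y : SymIdx n → ℝ} (h : thetaMat f d y = 0)
    (v : SymIdx n → ℝ) :
    ∑ p, eval y (pderiv p f) * v p = d * eval y f * (matOf v).trace := by
  simp only [eval_pderiv_of_thetaMat_eq_zero h, ite_mul, zero_mul, trace_matOf,
    Finset.sum_ite, Finset.sum_const_zero, add_zero, Finset.mul_sum]

theorem hasDerivAt_eval_eq_zero_of_thetaMat_eq_zero {x : ℝ → SymIdx n → ℝ}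
    {x' : SymIdx n → ℝ} {t : ℝ} (hx : HasDerivAt x x' t) (hθ : thetaMat f d (x t) = 0)
    (htr : ∀ᶠ u in nhds t, (matOf (x u)).trace = 1) :
    HasDerivAt (fun u => eval (x u) f) 0 t := by
  have htr' : (matOf x').trace = 0 :=
    (hasDerivAt_trace_matOf hx).unique ((hasDerivAt_const t 1).congr_of_eventuallyEq htr)
  simpa [sum_eval_pderiv_mul_of_thetaMat_eq_zero hθ, htr'] using hasDerivAt_eval hx f

end SymmetricMatrices

theorem f_constant_along_curve_general
    (n d : ℕ) (f : MvPolynomial (SymIdx n) ℝ)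
    (a b : ℝ) (x : ℝ → SymIdx n → ℝ)
    (hdiff : ∀ t ∈ Set.Ioo a b, DifferentiableAt ℝ x t)
    (htr : ∀ t ∈ Set.Ioo a b, (matOf (x t)).trace = 1)
    (hinv : ∀ t ∈ Set.Ioo a b, IsUnit (matOf (x t)))
    (hXT : ∀ t ∈ Set.Ioo a b, matOf (x t) * thetaMat f d (x t) = 0) :
    ∀ s ∈ Set.Ioo a b, ∀ t ∈ Set.Ioo a b, eval (x s) f = eval (x t) f := by
  have hθ : ∀ t ∈ Set.Ioo a b, thetaMat f d (x t) = 0 := fun t ht =>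
    (hinv t ht).mul_left_cancel (by rw [hXT t ht, mul_zero])
  have hderiv : ∀ t ∈ Set.Ioo a b, HasDerivAt (fun u => eval (x u) f) 0 t := fun t ht =>
    hasDerivAt_eval_eq_zero_of_thetaMat_eq_zero (hdiff t ht).hasDerivAt (hθ t ht)
      (Filter.eventually_of_mem (isOpen_Ioo.mem_nhds ht) htr)
  intro s hs t ht
  exact isOpen_Ioo.is_const_of_deriv_eq_zero isPreconnected_Ioo
    (fun u hu => (hderiv u hu).differentiableAt.differentiableWithinAt)
    (fun u hu => (hderiv u hu).deriv) hs ht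

/-- Along a differentiable curve `x(t)` in the trace-one slice on which
`X(x(t))` is invertible and `X(x(t))·Θ(x(t)) = 0`, the value `f(x(t))` is
constant. -/
theorem f_constant_along_curve
    (n d : ℕ) (f : MvPolynomial (SymIdx n) ℝ) (hf : f.IsHomogeneous d)
    (a b : ℝ) (hab : a < b) (x : ℝ → SymIdx n → ℝ)
    (hdiff : ∀ t ∈ Set.Ioo a b, DifferentiableAt ℝ x t)
    (htr : ∀ t ∈ Set.Ioo a b, (matOf (x t)).trace = 1)
    (hinv : ∀ t ∈ Set.Ioo a b, IsUnit (matOf (x t)))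
    (hXT : ∀ t ∈ Set.Ioo a b, matOf (x t) * thetaMat f d (x t) = 0) :
    ∀ s ∈ Set.Ioo a b, ∀ t ∈ Set.Ioo a b, eval (x s) f = eval (x t) f :=
  f_constant_along_curve_general n d f a b x hdiff htr hinv hXT
end
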